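/- Let S ⊂ ℝ^m be a finite set whose convex hull P has nonempty interior and let c : S → ℝ_{>0}. Fix x ∈ P° and define Λ^x(τ) := log Σ_{α∈S} m_{S,c,α}(x) e^{⟨α,τ⟩} and the Legendre transform I^x(y) := sup_{τ∈ℝ^m} { ⟨y,τ⟩ − Λ^x(τ) }. Then: (i) for every y ∈ P°, I^x(y) = δ_{S,c}(x) − δ_{S,c}(y) + ⟨x−y, τ_{S,c}(x)⟩; and (ii) for every y ∉ P, I^x(y) = +∞. -/

import Mathlib

/-!
Since the weights `m_α(x)` are the Gibbs weights at `τ_x := τ_{S,c}(x)`, the function `Λ^x` is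
the translate `τ ↦ log χ(τ_x + τ) - log χ(τ_x)`, so `I^x` is a shifted Legendre transform of
`log χ`. For `y = μ(τ_y)` Jensen's inequality for `exp`, taken with the Gibbs weights at `τ_y`,
shows that `σ ↦ ⟪y, σ⟫ - log χ(σ)` is maximal at `σ = τ_y`; evaluating there gives (i).
For `y ∉ P` a hyperplane strictly separates `y` from `S`, and along its normal `⟪y, τ⟫ - Λ^x(τ)`
grows linearly, which gives (ii).
-/

open MeasureTheory Filter Set
open scoped RealInnerProductSpace ENNReal Topology

noncomputable section

/-- `χ_{S,c}(τ) = Σ_{α∈S} c(α) e^{⟨α,τ⟩}`. -/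
def chiSc {m : ℕ} (S : Finset (EuclideanSpace ℝ (Fin m)))
    (c : EuclideanSpace ℝ (Fin m) → ℝ) (τ : EuclideanSpace ℝ (Fin m)) : ℝ :=
  ∑ α ∈ S, c α * Real.exp ⟪α, τ⟫

/-- The moment map `μ_{S,c}(τ) = Σ_{α∈S} (c(α) e^{⟨α,τ⟩} / χ_{S,c}(τ)) · α`. -/
def muSc {m : ℕ} (S : Finset (EuclideanSpace ℝ (Fin m)))
    (c : EuclideanSpace ℝ (Fin m) → ℝ) (τ : EuclideanSpace ℝ (Fin m)) :
    EuclideanSpace ℝ (Fin m) :=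
  (chiSc S c τ)⁻¹ • ∑ α ∈ S, (c α * Real.exp ⟪α, τ⟫) • α

/-- `m_{S,c,α}(x) = c(α) e^{⟨α,τ_{S,c}(x)⟩} / χ_{S,c}(τ_{S,c}(x))`, for a given inverse
`τSc` of the moment map. -/
def mSc {m : ℕ} (S : Finset (EuclideanSpace ℝ (Fin m)))
    (c : EuclideanSpace ℝ (Fin m) → ℝ)
    (τSc : EuclideanSpace ℝ (Fin m) → EuclideanSpace ℝ (Fin m))
    (α x : EuclideanSpace ℝ (Fin m)) : ℝ :=
  c α * Real.exp ⟪α, τSc x⟫ / chiSc S c (τSc x)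

section Separation

variable {E : Type*} [NormedAddCommGroup E] [InnerProductSpace ℝ E]

theorem exists_inner_lt_lt_of_notMem_convexHull [CompleteSpace E] {S : Finset E} {y : E}
    (hy : y ∉ convexHull ℝ (S : Set E)) :
    ∃ (v : E) (u : ℝ), (∀ α ∈ S, ⟪α, v⟫ < u) ∧ u < ⟪y, v⟫ := by
  obtain ⟨f, u, hfS, hfy⟩ := geometric_hahn_banach_closed_point (convex_convexHull ℝ _)
    (S.finite_toSet.isClosed_convexHull (𝕜 := ℝ)) hy
  have hf : ∀ z : E, ⟪z, (InnerProductSpace.toDual ℝ E).symm f⟫ = f z := fun z => by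
    rw [real_inner_comm, InnerProductSpace.toDual_symm_apply]
  exact ⟨_, u, fun α hα => (hf α).symm ▸ hfS α (subset_convexHull ℝ _ hα), (hf y).symm ▸ hfy⟩

theorem log_sum_mul_exp_inner_smul_le {S : Finset E} {w : E → ℝ} (hw : ∀ α ∈ S, 0 < w α)
    (hS : S.Nonempty) {v : E} {u : ℝ} (hv : ∀ α ∈ S, ⟪α, v⟫ < u) {N : ℝ} (hN : 0 ≤ N) :
    Real.log (∑ α ∈ S, w α * Real.exp ⟪α, N • v⟫) ≤ Real.log (∑ α ∈ S, w α) + N * u := by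
  have hpos : 0 < ∑ α ∈ S, w α * Real.exp ⟪α, N • v⟫ :=
    Finset.sum_pos (fun α hα => mul_pos (hw α hα) (Real.exp_pos _)) hS
  have hle : ∑ α ∈ S, w α * Real.exp ⟪α, N • v⟫ ≤ (∑ α ∈ S, w α) * Real.exp (N * u) := by
    rw [Finset.sum_mul]
    refine Finset.sum_le_sum fun α hα => mul_le_mul_of_nonneg_left ?_ (hw α hα).le
    rw [Real.exp_le_exp, real_inner_smul_right]
    exact mul_le_mul_of_nonneg_left (hv α hα).le hN
  have hW : 0 < ∑ α ∈ S, w α := Finset.sum_pos hw hS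
  calc Real.log (∑ α ∈ S, w α * Real.exp ⟪α, N • v⟫)
      ≤ Real.log ((∑ α ∈ S, w α) * Real.exp (N * u)) := Real.log_le_log hpos hle
    _ = Real.log (∑ α ∈ S, w α) + N * u := by
      rw [Real.log_mul hW.ne' (Real.exp_pos _).ne', Real.log_exp]

theorem iSup_inner_sub_log_sum_mul_exp_eq_top [CompleteSpace E] {S : Finset E} {w : E → ℝ}
    (hw : ∀ α ∈ S, 0 < w α) (hS : S.Nonempty) {y : E} (hy : y ∉ convexHull ℝ (S : Set E)) :
    ⨆ τ : E, ((⟪y, τ⟫ - Real.log (∑ α ∈ S, w α * Real.exp ⟪α, τ⟫) : ℝ) : EReal) = ⊤ := by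
  obtain ⟨v, u, hv, hu⟩ := exists_inner_lt_lt_of_notMem_convexHull hy
  have hgrowth : Tendsto (fun N : ℝ => N * (⟪y, v⟫ - u) - Real.log (∑ α ∈ S, w α))
      atTop atTop :=
    tendsto_atTop_add_const_right _ _ (tendsto_id.atTop_mul_const (sub_pos.2 hu))
  refine EReal.eq_top_iff_forall_lt _ |>.2 fun r => ?_
  obtain ⟨N, hNr, hN⟩ := ((hgrowth.eventually_gt_atTop r).and (eventually_ge_atTop 0)).exists
  refine (EReal.coe_lt_coe_iff.2 hNr).trans_le (le_iSup_of_le (N • v) ?_)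
  refine EReal.coe_le_coe_iff.2 ?_
  have := log_sum_mul_exp_inner_smul_le hw hS hv hN
  rw [real_inner_smul_right]
  linarith

end Separation

section MomentMap

variable {m : ℕ} {S : Finset (EuclideanSpace ℝ (Fin m))} {c : EuclideanSpace ℝ (Fin m) → ℝ}

theorem chiSc_pos (hS : S.Nonempty) (hc : ∀ α ∈ S, 0 < c α) (τ : EuclideanSpace ℝ (Fin m)) :
    0 < chiSc S c τ :=
  Finset.sum_pos (fun α hα => mul_pos (hc α hα) (Real.exp_pos _)) hS

theorem mSc_pos (hS : S.Nonempty) (hc : ∀ α ∈ S, 0 < c α)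
    (τSc : EuclideanSpace ℝ (Fin m) → EuclideanSpace ℝ (Fin m)) {α : EuclideanSpace ℝ (Fin m)}
    (hα : α ∈ S) (x : EuclideanSpace ℝ (Fin m)) : 0 < mSc S c τSc α x :=
  div_pos (mul_pos (hc α hα) (Real.exp_pos _)) (chiSc_pos hS hc _)

theorem log_sum_mSc_mul_exp (hS : S.Nonempty) (hc : ∀ α ∈ S, 0 < c α)
    (τSc : EuclideanSpace ℝ (Fin m) → EuclideanSpace ℝ (Fin m)) (x τ : EuclideanSpace ℝ (Fin m)) :
    Real.log (∑ α ∈ S, mSc S c τSc α x * Real.exp ⟪α, τ⟫) =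
      Real.log (chiSc S c (τSc x + τ)) - Real.log (chiSc S c (τSc x)) := by
  have hsum : ∑ α ∈ S, mSc S c τSc α x * Real.exp ⟪α, τ⟫ =
      chiSc S c (τSc x + τ) / chiSc S c (τSc x) := by
    rw [chiSc, Finset.sum_div]
    refine Finset.sum_congr rfl fun α _ => ?_
    rw [mSc, inner_add_right, Real.exp_add]
    ring
  rw [hsum, Real.log_div (chiSc_pos hS hc _).ne' (chiSc_pos hS hc _).ne']

/-- Jensen's inequality for `exp`, with the Gibbs weights `c α e^{⟪α, τ⟫} / χ(τ)`, whose
barycentre is `μ(τ)`. -/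
theorem chiSc_mul_exp_inner_sub_le (hS : S.Nonempty) (hc : ∀ α ∈ S, 0 < c α)
    {τ : EuclideanSpace ℝ (Fin m)} (σ : EuclideanSpace ℝ (Fin m)) :
    chiSc S c τ * Real.exp ⟪muSc S c τ, σ - τ⟫ ≤ chiSc S c σ := by
  have hχ := chiSc_pos hS hc τ
  set w : EuclideanSpace ℝ (Fin m) → ℝ := fun α => c α * Real.exp ⟪α, τ⟫ / chiSc S c τ
  have hw₀ : ∀ α ∈ S, 0 ≤ w α := fun α hα =>
    div_nonneg (mul_pos (hc α hα) (Real.exp_pos _)).le hχ.le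
  have hw₁ : ∑ α ∈ S, w α = 1 := by
    rw [← Finset.sum_div]
    exact div_self hχ.ne'
  have hmean : ⟪muSc S c τ, σ - τ⟫ = ∑ α ∈ S, w α • ⟪α, σ - τ⟫ := by
    rw [muSc, real_inner_smul_left, sum_inner, Finset.mul_sum]
    refine Finset.sum_congr rfl fun α _ => ?_
    rw [real_inner_smul_left, smul_eq_mul]
    ring
  have hchi : ∑ α ∈ S, w α • Real.exp ⟪α, σ - τ⟫ = chiSc S c σ / chiSc S c τ := by
    rw [chiSc, Finset.sum_div]
    refine Finset.sum_congr rfl fun α _ => ?_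
    rw [smul_eq_mul, inner_sub_right, Real.exp_sub]
    simp only [w]
    field_simp
  have hjensen := convexOn_exp.map_sum_le hw₀ hw₁ (fun α _ => Set.mem_univ ⟪α, σ - τ⟫)
  rw [← hmean, hchi] at hjensen
  rwa [le_div_iff₀ hχ, mul_comm] at hjensen

theorem inner_sub_log_chiSc_le (hS : S.Nonempty) (hc : ∀ α ∈ S, 0 < c α)
    {τ y : EuclideanSpace ℝ (Fin m)} (hy : muSc S c τ = y) (σ : EuclideanSpace ℝ (Fin m)) :
    ⟪y, σ⟫ - Real.log (chiSc S c σ) ≤ ⟪y, τ⟫ - Real.log (chiSc S c τ) := by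
  have hχ := chiSc_pos hS hc τ
  have h := Real.log_le_log (mul_pos hχ (Real.exp_pos _)) (chiSc_mul_exp_inner_sub_le hS hc σ)
  rw [Real.log_mul hχ.ne' (Real.exp_pos _).ne', Real.log_exp, hy, inner_sub_right] at h
  linarith

end MomentMap

theorem rateFunction_formula_general
    {m : ℕ} (S : Finset (EuclideanSpace ℝ (Fin m)))
    (c : EuclideanSpace ℝ (Fin m) → ℝ) (hc : ∀ α ∈ S, 0 < c α)
    (P : Set (EuclideanSpace ℝ (Fin m)))
    (hP : P = convexHull ℝ (S : Set (EuclideanSpace ℝ (Fin m))))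
    (hPo : (interior P).Nonempty)
    (τSc : EuclideanSpace ℝ (Fin m) → EuclideanSpace ℝ (Fin m))
    (hτ₂ : ∀ x ∈ interior P, muSc S c (τSc x) = x)
    (x : EuclideanSpace ℝ (Fin m)) :
    (let Λ : EuclideanSpace ℝ (Fin m) → ℝ := fun τ =>
      Real.log (∑ α ∈ S, mSc S c τSc α x * Real.exp ⟪α, τ⟫);
    let I : EuclideanSpace ℝ (Fin m) → EReal := fun y =>
      ⨆ τ : EuclideanSpace ℝ (Fin m), ((⟪y, τ⟫ - Λ τ : ℝ) : EReal);
    let δ : EuclideanSpace ℝ (Fin m) → ℝ := fun w =>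
      Real.log (chiSc S c (τSc w)) - ⟪w, τSc w⟫;
    (∀ y ∈ interior P, I y = ((δ x - δ y + ⟪x - y, τSc x⟫ : ℝ) : EReal)) ∧
    (∀ y, y ∉ P → I y = (⊤ : EReal))) := by
  intro Λ I δ
  have hS : S.Nonempty := by
    simpa [hP, convexHull_nonempty_iff] using hPo.mono interior_subset
  refine ⟨fun y hy => ?_, fun y hy => iSup_inner_sub_log_sum_mul_exp_eq_top
    (fun α hα => mSc_pos hS hc τSc hα x) hS (hP ▸ hy)⟩
  have hshift : ∀ τ, ⟪y, τ⟫ - Λ τ = (⟪y, τSc x + τ⟫ - Real.log (chiSc S c (τSc x + τ))) +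
      (Real.log (chiSc S c (τSc x)) - ⟪y, τSc x⟫) := fun τ => by
    simp only [Λ, log_sum_mSc_mul_exp hS hc, inner_add_right]
    ring
  have hvalue : δ x - δ y + ⟪x - y, τSc x⟫ = (⟪y, τSc y⟫ - Real.log (chiSc S c (τSc y))) +
      (Real.log (chiSc S c (τSc x)) - ⟪y, τSc x⟫) := by
    simp only [δ, inner_sub_left]
    ring
  refine le_antisymm (iSup_le fun τ => ?_) (le_iSup_of_le (τSc y - τSc x) ?_)
  · rw [hshift, hvalue, EReal.coe_le_coe_iff]
    exact add_le_add_left (inner_sub_log_chiSc_le hS hc (hτ₂ y hy) _) _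
  · rw [hshift, hvalue, add_sub_cancel]

/-- The Cramér rate function `I^x = (Λ^x)^*` of the finitely supported
Bernstein measure `dB_x = Σ_α m_{S,c,α}(x) δ_α`, for `x ∈ P°`: it equals
`δ_{S,c}(x) − δ_{S,c}(y) + ⟨x−y, τ_{S,c}(x)⟩` on `P°`, and `+∞` outside `P`. -/
theorem rateFunction_formula
    {m : ℕ} (S : Finset (EuclideanSpace ℝ (Fin m)))
    (c : EuclideanSpace ℝ (Fin m) → ℝ) (hc : ∀ α ∈ S, 0 < c α)
    (P : Set (EuclideanSpace ℝ (Fin m)))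
    (hP : P = convexHull ℝ (S : Set (EuclideanSpace ℝ (Fin m))))
    (hPo : (interior P).Nonempty)
    (τSc : EuclideanSpace ℝ (Fin m) → EuclideanSpace ℝ (Fin m))
    (hτ₁ : ∀ τ, τSc (muSc S c τ) = τ)
    (hτ₂ : ∀ x ∈ interior P, muSc S c (τSc x) = x)
    (x : EuclideanSpace ℝ (Fin m)) (hx : x ∈ interior P) :
    (let Λ : EuclideanSpace ℝ (Fin m) → ℝ := fun τ =>
      Real.log (∑ α ∈ S, mSc S c τSc α x * Real.exp ⟪α, τ⟫);
    let I : EuclideanSpace ℝ (Fin m) → EReal := fun y =>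
      ⨆ τ : EuclideanSpace ℝ (Fin m), ((⟪y, τ⟫ - Λ τ : ℝ) : EReal);
    let δ : EuclideanSpace ℝ (Fin m) → ℝ := fun w =>
      Real.log (chiSc S c (τSc w)) - ⟪w, τSc w⟫;
    (∀ y ∈ interior P, I y = ((δ x - δ y + ⟪x - y, τSc x⟫ : ℝ) : EReal)) ∧
    (∀ y, y ∉ P → I y = (⊤ : EReal))) :=
  rateFunction_formula_general S c hc P hP hPo τSc hτ₂ x

end
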